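/- For every TS4-frame F: (1) the skeleton F^♮ is an MIPC-frame; (2) for every valuation v on F there is a valuation v' on F^♮ (namely v'(p) = {[x] : R[x] ⊆ v(p)}) such that for every point x and every L∀∃-formula φ, F^♮,[x] ⊨_{v'} φ iff F,x ⊨_v φ^♮; (3) consequently F^♮ ⊨ φ iff F ⊨ φ^♮; and (4) every MIPC-frame is itself a TS4-frame and is isomorphic to its own skeleton. -/
import Mathlib


/-- Formulas of the monadic intuitionistic language `L∀∃`. -/
inductive MForm : Type
  | var : Nat → MForm
  | bot : MForm
  | and : MForm → MForm → MForm
  | or  : MForm → MForm → MForm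
  | imp : MForm → MForm → MForm
  | all : MForm → MForm
  | ex  : MForm → MForm

/-- Intuitionistic negation `¬φ := φ → ⊥`. -/
def MForm.neg (φ : MForm) : MForm := φ.imp MForm.bot

/-- Biconditional `φ ↔ ψ := (φ → ψ) ∧ (ψ → φ)`. -/
def MForm.iff (φ ψ : MForm) : MForm := (φ.imp ψ).and (ψ.imp φ)

/-- Formulas of the multimodal language `ML` with modalities `□`, `■_F`, `■_P`. -/
inductive TForm : Type
  | var : Nat → TForm
  | bot : TForm
  | and : TForm → TForm → TForm
  | or  : TForm → TForm → TForm
  | imp : TForm → TForm → TForm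
  | box : TForm → TForm
  | bF  : TForm → TForm
  | bP  : TForm → TForm

def TForm.neg (φ : TForm) : TForm := φ.imp TForm.bot
def TForm.iff (φ ψ : TForm) : TForm := (φ.imp ψ).and (ψ.imp φ)
/-- `◇φ := ¬□¬φ`. -/
def TForm.dia (φ : TForm) : TForm := ((φ.neg).box).neg
/-- `◆_F φ := ¬■_F¬φ`. -/
def TForm.dF (φ : TForm) : TForm := ((φ.neg).bF).neg
/-- `◆_P φ := ¬■_P¬φ`. -/
def TForm.dP (φ : TForm) : TForm := ((φ.neg).bP).neg

/-- The translation `(−)^♮ : L∀∃ → ML`. -/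
def natTr : MForm → TForm
  | .var n => (TForm.var n).box
  | .bot => TForm.bot
  | .and φ ψ => (natTr φ).and (natTr ψ)
  | .or φ ψ => (natTr φ).or (natTr ψ)
  | .imp φ ψ => (((natTr φ).neg).or (natTr ψ)).box
  | .all φ => (natTr φ).bF
  | .ex φ => (natTr φ).dP

/-- `(X,R,Q)` is an MIPC-frame: `R` is a partial order, `Q` a quasi-order,
`R ⊆ Q`, and `xQy` implies there is `z` with `xRz` and `z E_Q y`. -/
structure IsMIPCFrame {X : Type} (R Q : X → X → Prop) : Prop where
  rrefl : ∀ x, R x x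
  rtrans : ∀ x y z, R x y → R y z → R x z
  rantisymm : ∀ x y, R x y → R y x → x = y
  qrefl : ∀ x, Q x x
  qtrans : ∀ x y z, Q x y → Q y z → Q x z
  rsubq : ∀ x y, R x y → Q x y
  pass : ∀ x y, Q x y → ∃ z, R x z ∧ Q z y ∧ Q y z

/-- Satisfaction in an MIPC-frame: intuitionistic connectives are interpreted
via `R`, `∀` via `Q`-successors and `∃` via `E_Q`-related points. -/
def isat {X : Type} (R Q : X → X → Prop) (v : Nat → Set X) : MForm → X → Prop
  | .var n, x => x ∈ v n
  | .bot, _ => False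
  | .and φ ψ, x => isat R Q v φ x ∧ isat R Q v ψ x
  | .or φ ψ, x => isat R Q v φ x ∨ isat R Q v ψ x
  | .imp φ ψ, x => ∀ y, R x y → isat R Q v φ y → isat R Q v ψ y
  | .all φ, x => ∀ y, Q x y → isat R Q v φ y
  | .ex φ, x => ∃ y, (Q x y ∧ Q y x) ∧ isat R Q v φ y

/-- Validity in an MIPC-frame: truth at every point under every valuation
assigning `R`-upsets to the propositional letters. -/
def iValid {X : Type} (R Q : X → X → Prop) (φ : MForm) : Prop :=
  ∀ v : Nat → Set X, (∀ n x y, R x y → x ∈ v n → y ∈ v n) → ∀ x, isat R Q v φ x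

/-- `(X,R,Q)` is a TS4-frame: `R`, `Q` are quasi-orders, `R ⊆ Q`, and `xQy`
implies there is `z` with `xRz` and `z E_Q y`. -/
structure IsTS4Frame {X : Type} (R Q : X → X → Prop) : Prop where
  rrefl : ∀ x, R x x
  rtrans : ∀ x y z, R x y → R y z → R x z
  qrefl : ∀ x, Q x x
  qtrans : ∀ x y z, Q x y → Q y z → Q x z
  rsubq : ∀ x y, R x y → Q x y
  pass : ∀ x y, Q x y → ∃ z, R x z ∧ Q z y ∧ Q y z

/-- Satisfaction in a TS4-frame: `□` is interpreted via `R`-successors, `■_F`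
via `Q`-successors and `■_P` via `Q`-predecessors. -/
def tsat {X : Type} (R Q : X → X → Prop) (v : Nat → Set X) : TForm → X → Prop
  | .var n, x => x ∈ v n
  | .bot, _ => False
  | .and φ ψ, x => tsat R Q v φ x ∧ tsat R Q v ψ x
  | .or φ ψ, x => tsat R Q v φ x ∨ tsat R Q v ψ x
  | .imp φ ψ, x => tsat R Q v φ x → tsat R Q v ψ x
  | .box φ, x => ∀ y, R x y → tsat R Q v φ y
  | .bF φ, x => ∀ y, Q x y → tsat R Q v φ y
  | .bP φ, x => ∀ y, Q y x → tsat R Q v φ y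

/-- Validity in a TS4-frame. -/
def tValid {X : Type} (R Q : X → X → Prop) (φ : TForm) : Prop :=
  ∀ (v : Nat → Set X) (x : X), tsat R Q v φ x

/-- The setoid `x ∼ y iff xRy and yRx` associated with a quasi-order `R`. -/
def skelSetoid {X : Type} (R : X → X → Prop) (hr : ∀ x, R x x)
    (ht : ∀ x y z, R x y → R y z → R x z) : Setoid X :=
  ⟨fun x y => R x y ∧ R y x,
   ⟨fun x => ⟨hr x, hr x⟩, fun h => ⟨h.2, h.1⟩,
    fun h1 h2 => ⟨ht _ _ _ h1.1 h2.1, ht _ _ _ h2.2 h1.2⟩⟩⟩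

/-- The relation on the skeleton induced by a relation `S` on `X`:
`[x] S' [y] iff x S y`. -/
def liftRel {X : Type} (R : X → X → Prop) (hr : ∀ x, R x x)
    (ht : ∀ x y z, R x y → R y z → R x z) (S : X → X → Prop) :
    Quotient (skelSetoid R hr ht) → Quotient (skelSetoid R hr ht) → Prop :=
  fun a b => ∃ x y, Quotient.mk (skelSetoid R hr ht) x = a ∧
    Quotient.mk (skelSetoid R hr ht) y = b ∧ S x y

/-- The valuation `v'` on the skeleton given by `v'(p) = {[x] : R[x] ⊆ v(p)}`. -/
def skelVal {X : Type} (R : X → X → Prop) (hr : ∀ x, R x x)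
    (ht : ∀ x y z, R x y → R y z → R x z) (v : Nat → Set X) :
    Nat → Set (Quotient (skelSetoid R hr ht)) :=
  fun n => {a | ∃ x, Quotient.mk (skelSetoid R hr ht) x = a ∧ ∀ y, R x y → y ∈ v n}

/-- Membership in the lifted relation via representatives. -/
lemma liftRel_mk {X : Type} (R : X → X → Prop) (hr : ∀ x, R x x)
    (ht : ∀ x y z, R x y → R y z → R x z) (S : X → X → Prop)
    (compat : ∀ x x' y' y, R x x' → R y' y → S x' y' → S x y) (x y : X) :
    liftRel R hr ht S (Quotient.mk (skelSetoid R hr ht) x)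
      (Quotient.mk (skelSetoid R hr ht) y) ↔ S x y := by
  constructor
  · rintro ⟨x', y', hx, hy, hS⟩
    exact compat x x' y' y (Quotient.exact hx).2 (Quotient.exact hy).1 hS
  · intro hS
    exact ⟨x, y, rfl, rfl, hS⟩

lemma Rcompat {X : Type} {R Q : X → X → Prop} (h : IsTS4Frame R Q) :
    ∀ x x' y' y, R x x' → R y' y → R x' y' → R x y :=
  fun _ _ _ _ h1 h2 h3 => h.rtrans _ _ _ (h.rtrans _ _ _ h1 h3) h2

lemma Qcompat {X : Type} {R Q : X → X → Prop} (h : IsTS4Frame R Q) :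
    ∀ x x' y' y, R x x' → R y' y → Q x' y' → Q x y :=
  fun _ _ _ _ h1 h2 h3 =>
    h.qtrans _ _ _ (h.qtrans _ _ _ (h.rsubq _ _ h1) h3) (h.rsubq _ _ h2)

/-- Translated formulas are persistent along `R`. -/
lemma tpersist {X : Type} {R Q : X → X → Prop} (h : IsTS4Frame R Q)
    (v : Nat → Set X) : ∀ (φ : MForm) (x y : X), R x y →
    tsat R Q v (natTr φ) x → tsat R Q v (natTr φ) y := by
  intro φ
  induction φ with
  | var n => intro x y hxy hx z hyz; exact hx z (h.rtrans _ _ _ hxy hyz)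
  | bot => intro x y _ hx; exact hx
  | and φ ψ ihφ ihψ =>
      intro x y hxy hx; exact ⟨ihφ _ _ hxy hx.1, ihψ _ _ hxy hx.2⟩
  | or φ ψ ihφ ihψ =>
      intro x y hxy hx
      cases hx with
      | inl hl => exact Or.inl (ihφ _ _ hxy hl)
      | inr hr => exact Or.inr (ihψ _ _ hxy hr)
  | imp φ ψ _ _ => intro x y hxy hx z hyz; exact hx z (h.rtrans _ _ _ hxy hyz)
  | all φ _ =>
      intro x y hxy hx z hqz
      exact hx z (h.qtrans _ _ _ (h.rsubq _ _ hxy) hqz)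
  | ex φ _ =>
      intro x y hxy hx H
      exact hx (fun z hz => H z (h.qtrans _ _ _ hz (h.rsubq _ _ hxy)))

/-- The truth lemma: satisfaction in the skeleton matches satisfaction of the
translation in the original TS4-frame. -/
lemma truth_lemma {X : Type} {R Q : X → X → Prop} (h : IsTS4Frame R Q)
    (v : Nat → Set X) : ∀ (φ : MForm) (x : X),
    isat (liftRel R h.rrefl h.rtrans R) (liftRel R h.rrefl h.rtrans Q)
        (skelVal R h.rrefl h.rtrans v) φ
        (Quotient.mk (skelSetoid R h.rrefl h.rtrans) x) ↔
      tsat R Q v (natTr φ) x := by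
  intro φ
  induction φ with
  | var n =>
      intro x
      constructor
      · rintro ⟨x', hx', hall⟩ y hxy
        exact hall y (h.rtrans _ _ _ (Quotient.exact hx').1 hxy)
      · intro hall
        exact ⟨x, rfl, hall⟩
  | bot => intro x; exact Iff.rfl
  | and φ ψ ihφ ihψ =>
      intro x
      exact and_congr (ihφ x) (ihψ x)
  | or φ ψ ihφ ihψ =>
      intro x
      exact or_congr (ihφ x) (ihψ x)
  | imp φ ψ ihφ ihψ =>
      intro x
      constructor
      · intro H y hxy
        by_cases hφ : tsat R Q v (natTr φ) y
        · refine Or.inr ?_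
          have := H (Quotient.mk _ y)
            ((liftRel_mk R h.rrefl h.rtrans R (Rcompat h) x y).mpr hxy)
            ((ihφ y).mpr hφ)
          exact (ihψ y).mp this
        · exact Or.inl hφ
      · intro H b
        induction b using Quotient.ind with
        | _ y =>
          intro hxy hφ
          have hRxy : R x y :=
            (liftRel_mk R h.rrefl h.rtrans R (Rcompat h) x y).mp hxy
          rcases H y hRxy with hl | hr
          · exact absurd ((ihφ y).mp hφ) hl
          · exact (ihψ y).mpr hr
  | all φ ihφ =>
      intro x
      constructor
      · intro H y hxy
        exact (ihφ y).mp (H (Quotient.mk _ y)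
          ((liftRel_mk R h.rrefl h.rtrans Q (Qcompat h) x y).mpr hxy))
      · intro H b
        induction b using Quotient.ind with
        | _ y =>
          intro hxy
          exact (ihφ y).mpr
            (H y ((liftRel_mk R h.rrefl h.rtrans Q (Qcompat h) x y).mp hxy))
  | ex φ ihφ =>
      intro x
      constructor
      · rintro ⟨b, ⟨hq1, hq2⟩, hb⟩ H
        induction b using Quotient.ind with
        | _ y =>
          exact H y ((liftRel_mk R h.rrefl h.rtrans Q (Qcompat h) y x).mp hq2)
            ((ihφ y).mp hb)
      · intro H
        by_contra Hc
        apply H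
        intro y hyx hy
        obtain ⟨z, hyz, hzx, hxz⟩ := h.pass y x hyx
        have hz : tsat R Q v (natTr φ) z := tpersist h v φ y z hyz hy
        exact Hc ⟨Quotient.mk _ z,
          ⟨⟨(liftRel_mk R h.rrefl h.rtrans Q (Qcompat h) x z).mpr hxz,
            (liftRel_mk R h.rrefl h.rtrans Q (Qcompat h) z x).mpr hzx⟩,
           (ihφ z).mpr hz⟩⟩

/-- For every TS4-frame `(X,R,Q)`: (1) the skeleton
`(X',R',Q')` is an MIPC-frame; (2) for every valuation `v` on the frame, the
valuation `v'(p) = {[x] : R[x] ⊆ v(p)}` on the skeleton assigns `R'`-upsets and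
satisfies `F^♮,[x] ⊨_{v'} φ` iff `F,x ⊨_v φ^♮`; (3) consequently
`F^♮ ⊨ φ` iff `F ⊨ φ^♮`; (4) every MIPC-frame is itself a TS4-frame and is
isomorphic to its own skeleton. -/
theorem ts4_skeleton (X : Type) (R Q : X → X → Prop) (h : IsTS4Frame R Q) :
    let R' := liftRel R h.rrefl h.rtrans R
    let Q' := liftRel R h.rrefl h.rtrans Q
    IsMIPCFrame R' Q' ∧
    (∀ v : Nat → Set X,
      (∀ (n : Nat) (a b : Quotient (skelSetoid R h.rrefl h.rtrans)),
          R' a b → a ∈ skelVal R h.rrefl h.rtrans v n →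
            b ∈ skelVal R h.rrefl h.rtrans v n) ∧
      (∀ (x : X) (φ : MForm),
          isat R' Q' (skelVal R h.rrefl h.rtrans v) φ
              (Quotient.mk (skelSetoid R h.rrefl h.rtrans) x) ↔
            tsat R Q v (natTr φ) x)) ∧
    (∀ φ : MForm, iValid R' Q' φ ↔ tValid R Q (natTr φ)) ∧
    (∀ (Y : Type) (R₀ Q₀ : Y → Y → Prop) (h₀ : IsMIPCFrame R₀ Q₀),
      IsTS4Frame R₀ Q₀ ∧
      ∃ f : Y ≃ Quotient (skelSetoid R₀ h₀.rrefl h₀.rtrans),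
        (∀ a b : Y, R₀ a b ↔ liftRel R₀ h₀.rrefl h₀.rtrans R₀ (f a) (f b)) ∧
        (∀ a b : Y, Q₀ a b ↔ liftRel R₀ h₀.rrefl h₀.rtrans Q₀ (f a) (f b))) := by
  intro R' Q'
  have lR := liftRel_mk R h.rrefl h.rtrans R (Rcompat h)
  have lQ := liftRel_mk R h.rrefl h.rtrans Q (Qcompat h)
  have hmipc : IsMIPCFrame R' Q' := by
    constructor
    · intro a; induction a using Quotient.ind with
      | _ x => exact (lR x x).mpr (h.rrefl x)
    · intro a b c hab hbc
      induction a using Quotient.ind with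
      | _ x => induction b using Quotient.ind with
        | _ y => induction c using Quotient.ind with
          | _ z =>
            exact (lR x z).mpr (h.rtrans _ _ _ ((lR x y).mp hab) ((lR y z).mp hbc))
    · intro a b hab hba
      induction a using Quotient.ind with
      | _ x => induction b using Quotient.ind with
        | _ y => exact Quotient.sound ⟨(lR x y).mp hab, (lR y x).mp hba⟩
    · intro a; induction a using Quotient.ind with
      | _ x => exact (lQ x x).mpr (h.qrefl x)
    · intro a b c hab hbc
      induction a using Quotient.ind with
      | _ x => induction b using Quotient.ind with
        | _ y => induction c using Quotient.ind with
          | _ z =>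
            exact (lQ x z).mpr (h.qtrans _ _ _ ((lQ x y).mp hab) ((lQ y z).mp hbc))
    · intro a b hab
      induction a using Quotient.ind with
      | _ x => induction b using Quotient.ind with
        | _ y => exact (lQ x y).mpr (h.rsubq _ _ ((lR x y).mp hab))
    · intro a b hab
      induction a using Quotient.ind with
      | _ x => induction b using Quotient.ind with
        | _ y =>
          obtain ⟨z, hxz, hzy, hyz⟩ := h.pass x y ((lQ x y).mp hab)
          exact ⟨Quotient.mk _ z, (lR x z).mpr hxz, (lQ z y).mpr hzy,
            (lQ y z).mpr hyz⟩
  have hupset : ∀ (v : Nat → Set X) (n : Nat)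
      (a b : Quotient (skelSetoid R h.rrefl h.rtrans)),
      R' a b → a ∈ skelVal R h.rrefl h.rtrans v n →
        b ∈ skelVal R h.rrefl h.rtrans v n := by
    intro v n a b hab ha
    induction a using Quotient.ind with
    | _ x => induction b using Quotient.ind with
      | _ y =>
        obtain ⟨x', hx', hall⟩ := ha
        refine ⟨y, rfl, fun z hz => ?_⟩
        exact hall z (h.rtrans _ _ _
          (h.rtrans _ _ _ (Quotient.exact hx').1 ((lR x y).mp hab)) hz)
  refine ⟨hmipc, fun v => ⟨hupset v, fun x φ => truth_lemma h v φ x⟩, ?_, ?_⟩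
  · -- (3) validity transfer
    intro φ
    constructor
    · intro hval v x
      exact (truth_lemma h v φ x).mp
        (hval (skelVal R h.rrefl h.rtrans v) (hupset v) (Quotient.mk _ x))
    · intro hval v' hv' a
      induction a using Quotient.ind with
      | _ x =>
        set v : Nat → Set X := fun n => {z | Quotient.mk _ z ∈ v' n} with hv
        have hveq : skelVal R h.rrefl h.rtrans v = v' := by
          funext n
          ext a
          induction a using Quotient.ind with
          | _ z =>
            constructor
            · rintro ⟨z', hz', hall⟩
              exact hall z (Quotient.exact hz').1
            · intro hz
              exact ⟨z, rfl, fun w hw =>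
                hv' n _ _ ((lR z w).mpr hw) hz⟩
        rw [← hveq]
        exact (truth_lemma h v φ x).mpr (hval v x)
  · -- (4) every MIPC-frame is a TS4-frame isomorphic to its skeleton
    intro Y R₀ Q₀ h₀
    refine ⟨⟨h₀.rrefl, h₀.rtrans, h₀.qrefl, h₀.qtrans, h₀.rsubq, h₀.pass⟩, ?_⟩
    have lR0 := liftRel_mk R₀ h₀.rrefl h₀.rtrans R₀
      (fun _ _ _ _ h1 h2 h3 => h₀.rtrans _ _ _ (h₀.rtrans _ _ _ h1 h3) h2)
    have lQ0 := liftRel_mk R₀ h₀.rrefl h₀.rtrans Q₀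
      (fun _ _ _ _ h1 h2 h3 => h₀.qtrans _ _ _
        (h₀.qtrans _ _ _ (h₀.rsubq _ _ h1) h3) (h₀.rsubq _ _ h2))
    refine ⟨⟨Quotient.mk _,
      Quotient.lift id (fun a b hab => h₀.rantisymm a b hab.1 hab.2),
      fun a => rfl, fun a => ?_⟩, fun a b => (lR0 a b).symm, fun a b => (lQ0 a b).symm⟩
    induction a using Quotient.ind with
    | _ x => rfl
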